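/- Let N ≥ 2, let c ∈ ℂ be nonzero, let A be a unital associative ℂ-algebra, and fix one of the two data sets: (orthogonal) ε_i = 1, i' = N+1−i, κ = N/2 − 1, or (symplectic) N = 2n, ε_i = 1 for i ≤ n and −1 for i > n, i' = 2n+1−i, κ = n+1, with R(u,v) = I + c·P/(u−v) − c·Q/(u−v+cκ) the corresponding R-matrix. Let u, v ∈ ℂ satisfy u−v ∉ {0, c, −c}, u−v+cκ ≠ 0 and v−u+cκ ≠ 0. Suppose T and S are invertible N×N matrices with entries in A satisfying R(u,v)·(T⊗I)·(I⊗S) = (I⊗S)·(T⊗I)·R(u,v). Then the transpose-inverse matrices T̂ = (T^{−1})^t and Ŝ = (S^{−1})^t satisfy the same relation: R(u,v)·(T̂⊗I)·(I⊗Ŝ) = (I⊗Ŝ)·(T̂⊗I)·R(u,v). -/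

import Mathlib

/-- The R-matrix `R(u,v) = I + c·P/(u−v) − c·Q/(u−v+cκ)` on `ℂ^N ⊗ ℂ^N`, with its
complex entries viewed inside a unital associative `ℂ`-algebra `A`.  Here
`P_{(a,b),(c,d)} = δ_{a,d} δ_{b,c}` and `Q_{(a,b),(c,d)} = ε_a ε_c δ_{b,a'} δ_{d,c'}`. -/
noncomputable def RmatA (N : ℕ) (A : Type) [Ring A] [Algebra ℂ A]
    (ε : Fin N → ℤ) (pr : Fin N → Fin N) (κ c u v : ℂ) :
    Matrix (Fin N × Fin N) (Fin N × Fin N) A :=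
  Matrix.of fun p q =>
    (if p = q then 1 else 0)
      + algebraMap ℂ A (c / (u - v)) * (if p.1 = q.2 ∧ p.2 = q.1 then 1 else 0)
      - algebraMap ℂ A (c / (u - v + c * κ)) *
          ((ε p.1 : A) * (ε q.1 : A) * (if p.2 = pr p.1 ∧ q.2 = pr q.1 then 1 else 0))

/-- `(T⊗I)_{(a,b),(c,d)} = T_{a,c} δ_{b,d}` for an `N×N` matrix `T` over `A`. -/
def TtensorI {N : ℕ} {A : Type} [Ring A] (T : Matrix (Fin N) (Fin N) A) :
    Matrix (Fin N × Fin N) (Fin N × Fin N) A :=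
  Matrix.of fun p q => T p.1 q.1 * (if p.2 = q.2 then 1 else 0)

/-- `(I⊗S)_{(a,b),(c,d)} = δ_{a,c} S_{b,d}` for an `N×N` matrix `S` over `A`. -/
def ItensorS {N : ℕ} {A : Type} [Ring A] (S : Matrix (Fin N) (Fin N) A) :
    Matrix (Fin N × Fin N) (Fin N × Fin N) A :=
  Matrix.of fun p q => (if p.1 = q.1 then 1 else 0) * S p.2 q.2

/-- The twisted transposition `(M^t)_{i,j} = ε_i ε_j M_{j',i'}` of an `N×N` matrix `M`
over `A`. -/
def twtA {N : ℕ} {A : Type} [Ring A] (ε : Fin N → ℤ) (pr : Fin N → Fin N)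
    (M : Matrix (Fin N) (Fin N) A) : Matrix (Fin N) (Fin N) A :=
  Matrix.of fun i j => ((ε i : A) * (ε j : A)) * M (pr j) (pr i)

/-!
Write `X₁ = X ⊗ I` and `Y₂ = I ⊗ Y`. Taking inverses of the units on both sides of
`R (T₁ S₂) = (S₂ T₁) R` gives `R (S₂⁻¹ T₁⁻¹) = (T₁⁻¹ S₂⁻¹) R`.
Now apply the twisted transposition in both tensor factors at once. It reverses products with a
factor whose entries are scalars, and it fixes `R`, since it fixes `I`, `P` and `Q` separately
(`ε_i² = 1` and `i ↦ i'` is an involution). The entry of `X₁ Y₂` at `((a,b),(c,d))` is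
`X_{ac} Y_{bd}`, so although the entries of `X` and `Y` need not commute, `X₁ Y₂` goes to
`(X^t)₁ (Y^t)₂` and `Y₂ X₁` to `(Y^t)₂ (X^t)₁`. Hence the relation becomes the claim.
-/

open Matrix

section TwistedTranspose

variable {n A : Type*} [Ring A]

def twistedTranspose (ε : n → ℤ) (pr : n → n) (M : Matrix n n A) : Matrix n n A :=
  Matrix.of fun i j => (ε i * ε j) • M (pr j) (pr i)

@[simp]
theorem twistedTranspose_apply (ε : n → ℤ) (pr : n → n) (M : Matrix n n A) (i j : n) :
    twistedTranspose ε pr M i j = (ε i * ε j) • M (pr j) (pr i) :=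
  rfl

variable {ε : n → ℤ} {pr : n → n}

theorem twistedTranspose_add (M M' : Matrix n n A) :
    twistedTranspose ε pr (M + M') = twistedTranspose ε pr M + twistedTranspose ε pr M' := by
  ext i j
  simp [smul_add]

theorem twistedTranspose_sub (M M' : Matrix n n A) :
    twistedTranspose ε pr (M - M') = twistedTranspose ε pr M - twistedTranspose ε pr M' := by
  ext i j
  simp [smul_sub]

theorem twistedTranspose_smul {R : Type*} [SMul R A] [SMulCommClass ℤ R A] (r : R)
    (M : Matrix n n A) : twistedTranspose ε pr (r • M) = r • twistedTranspose ε pr M := by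
  ext i j
  simp [smul_comm]

theorem twistedTranspose_one [DecidableEq n] (hε : ∀ i, ε i * ε i = 1)
    (hpr : Function.Injective pr) : twistedTranspose ε pr (1 : Matrix n n A) = 1 := by
  ext i j
  by_cases h : i = j
  · subst h
    simp [hε]
  · simp [h, hpr.ne (Ne.symm h)]

theorem prod_sign_mul_self (hε : ∀ i, ε i * ε i = 1) (p : n × n) :
    ε p.1 * ε p.2 * (ε p.1 * ε p.2) = 1 := by
  linear_combination (ε p.1 * ε p.1) * hε p.2 + hε p.1

variable [Fintype n]

theorem twistedTranspose_mul_of_commute_right (hε : ∀ i, ε i * ε i = 1)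
    (hpr : Function.Involutive pr) (M R : Matrix n n A) (hR : ∀ i j x, Commute (R i j) x) :
    twistedTranspose ε pr (M * R) = twistedTranspose ε pr R * twistedTranspose ε pr M := by
  ext i j
  simp only [twistedTranspose_apply, mul_apply, Finset.smul_sum, smul_mul_smul_comm]
  refine Fintype.sum_equiv (hpr.toPerm pr) _ _ fun k => ?_
  rw [Function.Involutive.coe_toPerm, hpr k, (hR _ _ _).eq]
  congr 1
  linear_combination (-(ε i * ε j)) * hε (pr k)

theorem twistedTranspose_mul_of_commute_left (hε : ∀ i, ε i * ε i = 1)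
    (hpr : Function.Involutive pr) (R M : Matrix n n A) (hR : ∀ i j x, Commute (R i j) x) :
    twistedTranspose ε pr (R * M) = twistedTranspose ε pr M * twistedTranspose ε pr R := by
  ext i j
  simp only [twistedTranspose_apply, mul_apply, Finset.smul_sum, smul_mul_smul_comm]
  refine Fintype.sum_equiv (hpr.toPerm pr) _ _ fun k => ?_
  rw [Function.Involutive.coe_toPerm, hpr k, (hR _ _ _).eq]
  congr 1
  linear_combination (-(ε i * ε j)) * hε (pr k)

end TwistedTranspose

section TensorFactors

variable {N : ℕ} {A : Type} [Ring A]

theorem twtA_eq_twistedTranspose (ε : Fin N → ℤ) (pr : Fin N → Fin N)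
    (M : Matrix (Fin N) (Fin N) A) : twtA ε pr M = twistedTranspose ε pr M := by
  ext i j
  simp [twtA, zsmul_eq_mul]

theorem TtensorI_mul (X Y : Matrix (Fin N) (Fin N) A) :
    TtensorI (X * Y) = TtensorI X * TtensorI Y := by
  ext p q
  simp [TtensorI, mul_apply, Fintype.sum_prod_type]

theorem TtensorI_one : TtensorI (1 : Matrix (Fin N) (Fin N) A) = 1 := by
  ext ⟨a, b⟩ ⟨c, d⟩
  by_cases a = c <;> by_cases b = d <;> simp_all [TtensorI, one_apply]

theorem ItensorS_mul (X Y : Matrix (Fin N) (Fin N) A) :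
    ItensorS (X * Y) = ItensorS X * ItensorS Y := by
  ext p q
  simp [ItensorS, mul_apply, Fintype.sum_prod_type, Finset.mul_sum]

theorem ItensorS_one : ItensorS (1 : Matrix (Fin N) (Fin N) A) = 1 := by
  ext ⟨a, b⟩ ⟨c, d⟩
  by_cases a = c <;> by_cases b = d <;> simp_all [ItensorS, one_apply]

instance invertibleTtensorI (T : Matrix (Fin N) (Fin N) A) [Invertible T] :
    Invertible (TtensorI T) where
  invOf := TtensorI (⅟T)
  invOf_mul_self := by rw [← TtensorI_mul, invOf_mul_self, TtensorI_one]
  mul_invOf_self := by rw [← TtensorI_mul, mul_invOf_self, TtensorI_one]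

instance invertibleItensorS (S : Matrix (Fin N) (Fin N) A) [Invertible S] :
    Invertible (ItensorS S) where
  invOf := ItensorS (⅟S)
  invOf_mul_self := by rw [← ItensorS_mul, invOf_mul_self, ItensorS_one]
  mul_invOf_self := by rw [← ItensorS_mul, mul_invOf_self, ItensorS_one]

theorem TtensorI_mul_ItensorS_apply (X Y : Matrix (Fin N) (Fin N) A) (p q : Fin N × Fin N) :
    (TtensorI X * ItensorS Y) p q = X p.1 q.1 * Y p.2 q.2 := by
  simp [TtensorI, ItensorS, mul_apply, Fintype.sum_prod_type]

theorem ItensorS_mul_TtensorI_apply (X Y : Matrix (Fin N) (Fin N) A) (p q : Fin N × Fin N) :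
    (ItensorS Y * TtensorI X) p q = Y p.2 q.2 * X p.1 q.1 := by
  simp [TtensorI, ItensorS, mul_apply, Fintype.sum_prod_type]

variable (ε : Fin N → ℤ) (pr : Fin N → Fin N)

theorem twistedTranspose_TtensorI_mul_ItensorS (X Y : Matrix (Fin N) (Fin N) A) :
    twistedTranspose (fun p => ε p.1 * ε p.2) (Prod.map pr pr) (TtensorI X * ItensorS Y) =
      TtensorI (twtA ε pr X) * ItensorS (twtA ε pr Y) := by
  ext p q
  simp only [twistedTranspose_apply, TtensorI_mul_ItensorS_apply, twtA_eq_twistedTranspose,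
    smul_mul_smul_comm, Prod.map_fst, Prod.map_snd]
  congr 1
  ring

theorem twistedTranspose_ItensorS_mul_TtensorI (X Y : Matrix (Fin N) (Fin N) A) :
    twistedTranspose (fun p => ε p.1 * ε p.2) (Prod.map pr pr) (ItensorS Y * TtensorI X) =
      ItensorS (twtA ε pr Y) * TtensorI (twtA ε pr X) := by
  ext p q
  simp only [twistedTranspose_apply, ItensorS_mul_TtensorI_apply, twtA_eq_twistedTranspose,
    smul_mul_smul_comm, Prod.map_fst, Prod.map_snd]
  congr 1
  ring

end TensorFactors

section RMatrix

variable {n A : Type*} [DecidableEq n] [Ring A]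

def swapMatrix (n A : Type*) [DecidableEq n] [Ring A] : Matrix (n × n) (n × n) A :=
  Matrix.of fun p q => if p.1 = q.2 ∧ p.2 = q.1 then 1 else 0

def qMatrix (ε : n → ℤ) (pr : n → n) : Matrix (n × n) (n × n) A :=
  Matrix.of fun p q => (ε p.1 : A) * (ε q.1 : A) * if p.2 = pr p.1 ∧ q.2 = pr q.1 then 1 else 0

variable {ε : n → ℤ} {pr : n → n}

theorem twistedTranspose_swapMatrix (hε : ∀ i, ε i * ε i = 1) (hpr : Function.Injective pr) :
    twistedTranspose (fun p => ε p.1 * ε p.2) (Prod.map pr pr) (swapMatrix n A) =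
      swapMatrix n A := by
  ext ⟨a, b⟩ ⟨c, d⟩
  by_cases h : a = d ∧ b = c
  · obtain ⟨rfl, rfl⟩ := h
    have hsign : ε a * ε b * (ε b * ε a) = 1 := by
      linear_combination (ε a * ε a) * hε b + hε a
    simpa [swapMatrix] using congrArg (Int.cast : ℤ → A) hsign
  · have h' : ¬(pr c = pr b ∧ pr d = pr a) := by simpa [hpr.eq_iff, eq_comm, and_comm] using h
    simp [swapMatrix, h, h']

theorem twistedTranspose_qMatrix (hε : ∀ i, ε i * ε i = 1) (hpr : Function.Involutive pr) :
    twistedTranspose (fun p => ε p.1 * ε p.2) (Prod.map pr pr) (qMatrix ε pr : Matrix _ _ A) =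
      qMatrix ε pr := by
  ext ⟨a, b⟩ ⟨c, d⟩
  by_cases h : b = pr a ∧ d = pr c
  · obtain ⟨rfl, rfl⟩ := h
    have hsign : ε a * ε (pr a) * (ε c * ε (pr c)) * (ε (pr c) * ε (pr a)) = ε a * ε c := by
      linear_combination (ε a * ε c) * (ε (pr c) * ε (pr c) * hε (pr a) + hε (pr c))
    simpa [qMatrix, hpr a, hpr c] using congrArg (Int.cast : ℤ → A) hsign
  · have h' : ¬(pr d = c ∧ pr b = a) := by
      rwa [hpr.eq_iff, hpr.eq_iff, and_comm]
    simp [qMatrix, hpr _, h, h']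

end RMatrix

section RmatA

variable {N : ℕ} {A : Type} [Ring A] [Algebra ℂ A] {ε : Fin N → ℤ} {pr : Fin N → Fin N}
  {κ c u v : ℂ}

theorem RmatA_eq :
    RmatA N A ε pr κ c u v =
      1 + (c / (u - v)) • swapMatrix (Fin N) A - (c / (u - v + c * κ)) • qMatrix ε pr := by
  ext p q
  simp only [RmatA, swapMatrix, qMatrix, Matrix.sub_apply, Matrix.add_apply, Matrix.smul_apply,
    of_apply]
  simp [one_apply, Algebra.smul_def]

theorem twistedTranspose_RmatA (hε : ∀ i, ε i * ε i = 1) (hpr : Function.Involutive pr) :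
    twistedTranspose (fun p => ε p.1 * ε p.2) (Prod.map pr pr) (RmatA N A ε pr κ c u v) =
      RmatA N A ε pr κ c u v := by
  rw [RmatA_eq, twistedTranspose_sub, twistedTranspose_add, twistedTranspose_smul,
    twistedTranspose_smul,
    twistedTranspose_one (prod_sign_mul_self hε) (hpr.prodMap hpr).injective,
    twistedTranspose_swapMatrix hε hpr.injective, twistedTranspose_qMatrix hε hpr]

theorem RmatA_apply_commute (p q : Fin N × Fin N) (x : A) :
    Commute (RmatA N A ε pr κ c u v p q) x := by
  have hmem : RmatA N A ε pr κ c u v p q ∈ Subalgebra.center ℂ A := by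
    simp only [RmatA, of_apply]
    split_ifs <;>
      apply_rules [sub_mem, add_mem, mul_mem, one_mem, zero_mem, Subalgebra.algebraMap_mem,
        intCast_mem]
  exact ((Subalgebra.mem_center_iff.mp hmem) x).symm

end RmatA

theorem rtt_transpose_inverse_general (N : ℕ) (c : ℂ)
    (A : Type) [Ring A] [Algebra ℂ A]
    (ε : Fin N → ℤ) (pr : Fin N → Fin N) (κ : ℂ)
    (hdata : ((∀ i, ε i = 1) ∧ pr = Fin.rev ∧ κ = (N : ℂ) / 2 - 1) ∨
      (∃ n, N = 2 * n ∧ (∀ i : Fin N, ε i = if (i : ℕ) < n then 1 else -1) ∧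
        pr = Fin.rev ∧ κ = (n : ℂ) + 1))
    (u v : ℂ)
    (T S : Matrix (Fin N) (Fin N) A) [Invertible T] [Invertible S]
    (hRTT : RmatA N A ε pr κ c u v * TtensorI T * ItensorS S =
      ItensorS S * TtensorI T * RmatA N A ε pr κ c u v) :
    RmatA N A ε pr κ c u v * TtensorI (twtA ε pr (⅟T)) * ItensorS (twtA ε pr (⅟S)) =
      ItensorS (twtA ε pr (⅟S)) * TtensorI (twtA ε pr (⅟T)) *
        RmatA N A ε pr κ c u v := by
  obtain ⟨hε, hpr⟩ : (∀ i, ε i * ε i = 1) ∧ Function.Involutive pr := by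
    rcases hdata with ⟨hε, hpr, -⟩ | ⟨n, -, hε, hpr, -⟩
    · exact ⟨fun i => by simp [hε i], hpr ▸ Fin.rev_involutive⟩
    · exact ⟨fun i => by rw [hε i]; split_ifs <;> rfl, hpr ▸ Fin.rev_involutive⟩
  set R := RmatA N A ε pr κ c u v
  have hinv :
      SemiconjBy R (ItensorS (⅟S) * TtensorI (⅟T)) (TtensorI (⅟T) * ItensorS (⅟S)) := by
    have h : SemiconjBy R (TtensorI T * ItensorS S) (ItensorS S * TtensorI T) := by
      simpa only [SemiconjBy, mul_assoc] using hRTT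
    exact h.units_inv_right (x := unitOfInvertible (TtensorI T) * unitOfInvertible (ItensorS S))
      (y := unitOfInvertible (ItensorS S) * unitOfInvertible (TtensorI T))
  have hcomm : ∀ p q x, Commute (R p q) x := RmatA_apply_commute
  have hε₂ := prod_sign_mul_self hε
  have hpr₂ := hpr.prodMap hpr
  calc R * TtensorI (twtA ε pr (⅟T)) * ItensorS (twtA ε pr (⅟S))
      = twistedTranspose (fun p => ε p.1 * ε p.2) (Prod.map pr pr)
          (TtensorI (⅟T) * ItensorS (⅟S) * R) := by
        rw [twistedTranspose_mul_of_commute_right hε₂ hpr₂ _ _ hcomm,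
          twistedTranspose_RmatA hε hpr, twistedTranspose_TtensorI_mul_ItensorS, mul_assoc]
    _ = twistedTranspose (fun p => ε p.1 * ε p.2) (Prod.map pr pr)
          (R * (ItensorS (⅟S) * TtensorI (⅟T))) := by
        rw [hinv.eq]
    _ = ItensorS (twtA ε pr (⅟S)) * TtensorI (twtA ε pr (⅟T)) * R := by
        rw [twistedTranspose_mul_of_commute_left hε₂ hpr₂ _ _ hcomm,
          twistedTranspose_RmatA hε hpr, twistedTranspose_ItensorS_mul_TtensorI]

/-- For the orthogonal data set (`ε_i = 1`, `i' = N+1−i` i.e. `Fin.rev`, `κ = N/2 − 1`)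
or the symplectic data set (`N = 2n`, `ε_i = ±1`, `i' = 2n+1−i` i.e. `Fin.rev`,
`κ = n+1`): if invertible matrices `T`, `S` over a unital `ℂ`-algebra `A` satisfy the
RTT-relation `R(u,v)·(T⊗I)·(I⊗S) = (I⊗S)·(T⊗I)·R(u,v)` (with
`u−v ∉ {0, c, −c}`, `u−v+cκ ≠ 0`, `v−u+cκ ≠ 0`), then the transpose-inverse matrices
`T̂ = (T⁻¹)^t` and `Ŝ = (S⁻¹)^t` satisfy the same relation. -/
theorem rtt_transpose_inverse (N : ℕ) (hN : 2 ≤ N) (c : ℂ) (hc : c ≠ 0)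
    (A : Type) [Ring A] [Algebra ℂ A]
    (ε : Fin N → ℤ) (pr : Fin N → Fin N) (κ : ℂ)
    (hdata : ((∀ i, ε i = 1) ∧ pr = Fin.rev ∧ κ = (N : ℂ) / 2 - 1) ∨
      (∃ n, N = 2 * n ∧ (∀ i : Fin N, ε i = if (i : ℕ) < n then 1 else -1) ∧
        pr = Fin.rev ∧ κ = (n : ℂ) + 1))
    (u v : ℂ) (h0 : u - v ≠ 0) (h1 : u - v ≠ c) (h2 : u - v ≠ -c)
    (h3 : u - v + c * κ ≠ 0) (h4 : v - u + c * κ ≠ 0)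
    (T S : Matrix (Fin N) (Fin N) A) [Invertible T] [Invertible S]
    (hRTT : RmatA N A ε pr κ c u v * TtensorI T * ItensorS S =
      ItensorS S * TtensorI T * RmatA N A ε pr κ c u v) :
    RmatA N A ε pr κ c u v * TtensorI (twtA ε pr (⅟T)) * ItensorS (twtA ε pr (⅟S)) =
      ItensorS (twtA ε pr (⅟S)) * TtensorI (twtA ε pr (⅟T)) *
        RmatA N A ε pr κ c u v :=
  rtt_transpose_inverse_general N c A ε pr κ hdata u v T S hRTT
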